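/- Let A be an integral domain and ⋆ a star operation of finite type on A. Then A has the ⋆-finite character if and only if for every nonzero a ∈ A, every ⋆-comaximal collection over a consisting of proper ⋆-finite ⋆-ideals of A is finite. -/

import Mathlib

open scoped nonZeroDivisors

/-- A star operation on an integral domain `A` with quotient field `K`: a map on
(nonzero) fractional ideals satisfying `A^⋆ = A`, `(xI)^⋆ = x·I^⋆`, `I ⊆ I^⋆`,
monotonicity and idempotency. -/
structure StarOperation (A : Type*) [CommRing A] [IsDomain A]
    (K : Type*) [Field K] [Algebra A K] [IsFractionRing A K] where
  star : FractionalIdeal A⁰ K → FractionalIdeal A⁰ K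
  star_one : star 1 = 1
  star_smul : ∀ (x : K), x ≠ 0 → ∀ I : FractionalIdeal A⁰ K, I ≠ 0 →
    star (FractionalIdeal.spanSingleton A⁰ x * I) = FractionalIdeal.spanSingleton A⁰ x * star I
  le_star : ∀ I : FractionalIdeal A⁰ K, I ≠ 0 → I ≤ star I
  mono : ∀ I J : FractionalIdeal A⁰ K, I ≠ 0 → I ≤ J → star I ≤ star J
  star_idem : ∀ I : FractionalIdeal A⁰ K, I ≠ 0 → star (star I) = star I

variable {A : Type*} [CommRing A] [IsDomain A]
  {K : Type*} [Field K] [Algebra A K] [IsFractionRing A K]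

/-- `⋆` is of finite type: `I^⋆` is the union of the `J^⋆` over the finitely
generated (nonzero) fractional ideals `J ⊆ I`. -/
def StarOperation.IsFiniteType (s : StarOperation A K) : Prop :=
  ∀ I : FractionalIdeal A⁰ K, I ≠ 0 → ∀ x : K, x ∈ s.star I →
    ∃ J : FractionalIdeal A⁰ K, J ≠ 0 ∧ J ≤ I ∧ (J : Submodule A K).FG ∧ x ∈ s.star J

/-- A (nonzero, integral) ideal `I` is a `⋆`-ideal if `I^⋆ = I`. -/
def IsStarIdeal (s : StarOperation A K) (I : Ideal A) : Prop :=
  I ≠ 0 ∧ s.star ↑I = (I : FractionalIdeal A⁰ K)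

/-- A (nonzero, integral) ideal `I` is `⋆`-finite if `J^⋆ = I^⋆` for some finitely
generated (nonzero) ideal `J`. -/
def IsStarFinite (s : StarOperation A K) (I : Ideal A) : Prop :=
  I ≠ 0 ∧ ∃ J : Ideal A, J ≠ 0 ∧ J.FG ∧ s.star ↑J = s.star (I : FractionalIdeal A⁰ K)

/-- An ideal of `A` is `⋆`-maximal if it is maximal among proper `⋆`-ideals. -/
def IsStarMaximal (s : StarOperation A K) (M : Ideal A) : Prop :=
  M ≠ ⊤ ∧ IsStarIdeal s M ∧ ∀ J : Ideal A, J ≠ ⊤ → IsStarIdeal s J → M ≤ J → J = M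

/-- Property (⋆-c.a.): for every pair of proper ⋆-finite ⋆-ideals `𝔞₁, 𝔞₂` containing
`𝔞`, the ideal `(𝔞₁ + 𝔞₂)^⋆` is proper. -/
def StarCA (s : StarOperation A K) (𝔞 : Ideal A) : Prop :=
  ∀ 𝔞₁ 𝔞₂ : Ideal A, 𝔞 ≤ 𝔞₁ → 𝔞 ≤ 𝔞₂ →
    𝔞₁ ≠ ⊤ → IsStarIdeal s 𝔞₁ → IsStarFinite s 𝔞₁ →
    𝔞₂ ≠ ⊤ → IsStarIdeal s 𝔞₂ → IsStarFinite s 𝔞₂ →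
    s.star ↑(𝔞₁ + 𝔞₂) ≠ 1

/-- `ℱ` is a ⋆-comaximal collection over `a`: `a` lies in every member and
`(𝔞₁ + 𝔞₂)^⋆ = A` for all distinct members. -/
def IsStarComaximalOver (s : StarOperation A K) (a : A) (F : Set (Ideal A)) : Prop :=
  (∀ I ∈ F, a ∈ I) ∧ ∀ I ∈ F, ∀ J ∈ F, I ≠ J → s.star ↑(I + J) = 1

/-- `(Σ')^⋆_a`: the ⋆-comaximal collections over `a` of proper ⋆-finite ⋆-ideals. -/
def SigmaP (s : StarOperation A K) (a : A) : Set (Set (Ideal A)) :=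
  {F | IsStarComaximalOver s a F ∧ ∀ I ∈ F, I ≠ ⊤ ∧ IsStarIdeal s I ∧ IsStarFinite s I}

/-- `Σ^⋆_a`: members of `(Σ')^⋆_a` all of whose ideals satisfy (⋆-c.a.). -/
def SigmaCA (s : StarOperation A K) (a : A) : Set (Set (Ideal A)) :=
  {F | F ∈ SigmaP s a ∧ ∀ I ∈ F, StarCA s I}

/-!
(⇒) By Zorn's lemma and the finite type of `⋆`, every proper `⋆`-ideal lies in a `⋆`-maximal
ideal, and two members of a `⋆`-comaximal family cannot lie in the same one; so the family
injects into the `⋆`-maximal ideals containing `a`.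

(⇐) Call a proper `⋆`-finite `⋆`-ideal containing `a` admissible, and let `V(b)`
(`starMaximalAbove b`) be the set of `⋆`-maximal ideals containing `b`. If `V(b)` is infinite
for an admissible `b`, then `b` splits: there are `⋆`-comaximal admissible `c, d ⊇ b` with `V(d)`
infinite. Indeed, given finitely many admissible `x` with `V(x)` finite, pick `M ∈ V(b)` outside
every `V(x)` and `N ≠ M` in `V(b)`. Finite type turns `(M + N)^⋆ = A` and `(x + M)^⋆ = A` into
the same equations for finitely generated subideals, and adjoining those to `b` gives admissible
ideals `d ⊆ M` and `c ⊆ N`, `⋆`-comaximal with each other and `d` with every `x`. Were `V(d)`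
always finite, this would build an infinite `⋆`-comaximal family. Iterating the splitting from
`(a)^⋆` gives `d₀ ⊆ d₁ ⊆ ⋯` and pairwise `⋆`-comaximal `c₀, c₁, …`, an infinite family again.
-/

open FractionalIdeal

theorem Submodule.FG.exists_fg_le_sup_of_le_sup {R M : Type*} [Semiring R] [AddCommMonoid M]
    [Module R M] {N P Q : Submodule R M} (hN : N.FG) (hNPQ : N ≤ P ⊔ Q) :
    ∃ P' ≤ P, ∃ Q' ≤ Q, P'.FG ∧ Q'.FG ∧ N ≤ P' ⊔ Q' := by
  induction N, hN using Submodule.fg_induction with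
  | singleton x =>
    obtain ⟨p, hp, q, hq, rfl⟩ := mem_sup.mp (hNPQ (mem_span_singleton_self x))
    exact ⟨R ∙ p, (span_singleton_le_iff_mem _ _).mpr hp, R ∙ q,
      (span_singleton_le_iff_mem _ _).mpr hq, fg_span_singleton p, fg_span_singleton q,
      (span_singleton_le_iff_mem _ _).mpr
        (add_mem_sup (mem_span_singleton_self p) (mem_span_singleton_self q))⟩
  | sup N₁ N₂ _ _ ih₁ ih₂ =>
    obtain ⟨P₁, hP₁, Q₁, hQ₁, hP₁fg, hQ₁fg, hN₁⟩ := ih₁ (le_sup_left.trans hNPQ)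
    obtain ⟨P₂, hP₂, Q₂, hQ₂, hP₂fg, hQ₂fg, hN₂⟩ := ih₂ (le_sup_right.trans hNPQ)
    exact ⟨P₁ ⊔ P₂, sup_le hP₁ hP₂, Q₁ ⊔ Q₂, sup_le hQ₁ hQ₂, hP₁fg.sup hP₂fg, hQ₁fg.sup hQ₂fg,
      sup_le (hN₁.trans (sup_le_sup le_sup_left le_sup_left))
        (hN₂.trans (sup_le_sup le_sup_right le_sup_right))⟩

namespace StarOperation

section Closure

variable (s : StarOperation A K) {I J M : Ideal A}

lemma star_coeIdeal_le_one (hI : I ≠ ⊥) : s.star (I : FractionalIdeal A⁰ K) ≤ 1 := by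
  simpa only [s.star_one] using s.mono _ 1 (coeIdeal_ne_zero.mpr hI) coeIdeal_le_one

lemma star_coeIdeal_mono (hI : I ≠ ⊥) (hIJ : I ≤ J) :
    s.star (I : FractionalIdeal A⁰ K) ≤ s.star J :=
  s.mono _ _ (coeIdeal_ne_zero.mpr hI) (coeIdeal_le_coeIdeal K |>.mpr hIJ)

lemma star_coeIdeal_eq_one_of_le (hI : I ≠ ⊥) (hIJ : I ≤ J)
    (h : s.star (I : FractionalIdeal A⁰ K) = 1) : s.star (J : FractionalIdeal A⁰ K) = 1 :=
  le_antisymm (s.star_coeIdeal_le_one (ne_bot_of_le_ne_bot hI hIJ))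
    (h ▸ s.star_coeIdeal_mono hI hIJ)

lemma star_coeIdeal_ne_one_of_le (hI : I ≠ ⊥) (hIM : I ≤ M) (hM : IsStarIdeal s M)
    (hM_ne_top : M ≠ ⊤) : s.star (I : FractionalIdeal A⁰ K) ≠ 1 := fun h => by
  have := s.star_coeIdeal_eq_one_of_le hI hIM h
  rw [hM.2, coeIdeal_eq_one, Ideal.one_eq_top] at this
  exact hM_ne_top this

-- `I^⋆ ∩ A`, which is `I^⋆` itself when `I ≠ ⊥`; the value of `⋆` at `0` is unconstrained.
def starCl (I : Ideal A) : Ideal A :=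
  (s.star (I : FractionalIdeal A⁰ K) : Submodule A K).comap (Algebra.linearMap A K)

lemma coeIdeal_starCl (hI : I ≠ ⊥) :
    (s.starCl I : FractionalIdeal A⁰ K) = s.star I := by
  ext z
  rw [mem_coeIdeal A⁰]
  refine ⟨fun ⟨x, hx, hxz⟩ => hxz ▸ hx, fun hz => ?_⟩
  obtain ⟨x, rfl⟩ := (mem_one_iff A⁰).mp (s.star_coeIdeal_le_one hI hz)
  exact ⟨x, hz, rfl⟩

lemma starCl_eq_top_iff (hI : I ≠ ⊥) :
    s.starCl I = ⊤ ↔ s.star (I : FractionalIdeal A⁰ K) = 1 := by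
  rw [← s.coeIdeal_starCl hI, coeIdeal_eq_one, Ideal.one_eq_top]

lemma le_starCl (hI : I ≠ ⊥) : I ≤ s.starCl I := fun x hx =>
  s.le_star _ (coeIdeal_ne_zero.mpr hI) ((mem_coeIdeal A⁰).mpr ⟨x, hx, rfl⟩)

lemma starCl_ne_bot (hI : I ≠ ⊥) : s.starCl I ≠ ⊥ :=
  ne_bot_of_le_ne_bot hI (s.le_starCl hI)

lemma star_coeIdeal_starCl (hI : I ≠ ⊥) :
    s.star (s.starCl I : FractionalIdeal A⁰ K) = s.star I := by
  rw [s.coeIdeal_starCl hI, s.star_idem _ (coeIdeal_ne_zero.mpr hI)]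

lemma isStarIdeal_starCl (hI : I ≠ ⊥) : IsStarIdeal s (s.starCl I) :=
  ⟨s.starCl_ne_bot hI, by rw [s.star_coeIdeal_starCl hI, s.coeIdeal_starCl hI]⟩

lemma starCl_le (hI : I ≠ ⊥) (hM : IsStarIdeal s M) (hIM : I ≤ M) : s.starCl I ≤ M := by
  rw [← coeIdeal_le_coeIdeal K, s.coeIdeal_starCl hI, ← hM.2]
  exact s.star_coeIdeal_mono hI hIM

lemma star_coeIdeal_sup_le_of_le {I₁ I₂ : Ideal A} (hI₁ : I₁ ≠ ⊥) (hI₂ : I₂ ≠ ⊥)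
    (h : s.star (I₁ : FractionalIdeal A⁰ K) ≤ s.star I₂) :
    s.star ((I₁ ⊔ J : Ideal A) : FractionalIdeal A⁰ K) ≤ s.star (I₂ ⊔ J : Ideal A) := by
  have hI₂J : I₂ ⊔ J ≠ ⊥ := ne_bot_of_le_ne_bot hI₂ le_sup_left
  have hle : ((I₁ ⊔ J : Ideal A) : FractionalIdeal A⁰ K) ≤ s.star (I₂ ⊔ J : Ideal A) := by
    rw [coeIdeal_sup, ← sup_eq_add]
    refine sup_le ((s.le_star _ (coeIdeal_ne_zero.mpr hI₁)).trans
      (h.trans (s.star_coeIdeal_mono hI₂ le_sup_left))) ?_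
    exact (coeIdeal_le_coeIdeal K |>.mpr le_sup_right).trans
      (s.le_star _ (coeIdeal_ne_zero.mpr hI₂J))
  calc s.star ((I₁ ⊔ J : Ideal A) : FractionalIdeal A⁰ K)
      ≤ s.star (s.star (I₂ ⊔ J : Ideal A)) :=
        s.mono _ _ (coeIdeal_ne_zero.mpr (ne_bot_of_le_ne_bot hI₁ le_sup_left)) hle
    _ = s.star (I₂ ⊔ J : Ideal A) := s.star_idem _ (coeIdeal_ne_zero.mpr hI₂J)

lemma isStarFinite_of_fg (hI : I ≠ ⊥) (hfg : I.FG) : IsStarFinite s I :=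
  ⟨hI, I, hI, hfg, rfl⟩

variable {s} in
lemma _root_.IsStarFinite.sup_fg (hI : IsStarFinite s I) (hJ : J.FG) : IsStarFinite s (I ⊔ J) := by
  obtain ⟨hI0, I', hI'0, hI'fg, hI'⟩ := hI
  exact ⟨ne_bot_of_le_ne_bot hI0 le_sup_left, I' ⊔ J, ne_bot_of_le_ne_bot hI'0 le_sup_left,
    Submodule.FG.sup hI'fg hJ, le_antisymm (s.star_coeIdeal_sup_le_of_le hI'0 hI0 hI'.le)
      (s.star_coeIdeal_sup_le_of_le hI0 hI'0 hI'.ge)⟩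

variable {s} in
lemma _root_.IsStarFinite.starCl (hI : IsStarFinite s I) : IsStarFinite s (s.starCl I) := by
  obtain ⟨hI0, I', hI'0, hI'fg, hI'⟩ := hI
  exact ⟨s.starCl_ne_bot hI0, I', hI'0, hI'fg, by rw [s.star_coeIdeal_starCl hI0, hI']⟩

end Closure

section FiniteType

variable {s : StarOperation A K} {I M : Ideal A}

lemma exists_fg_le_of_mem_star (hs : s.IsFiniteType) (hI : I ≠ ⊥) {x : K}
    (hx : x ∈ s.star (I : FractionalIdeal A⁰ K)) :
    ∃ J ≤ I, J ≠ ⊥ ∧ J.FG ∧ x ∈ s.star (J : FractionalIdeal A⁰ K) := by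
  obtain ⟨J, hJ0, hJI, hJfg, hxJ⟩ := hs _ (coeIdeal_ne_zero.mpr hI) x hx
  obtain ⟨J, rfl⟩ := le_one_iff_exists_coeIdeal.mp (hJI.trans coeIdeal_le_one)
  exact ⟨J, coeIdeal_le_coeIdeal K |>.mp hJI, coeIdeal_ne_zero.mp hJ0,
    (coeIdeal_fg A⁰ (IsFractionRing.injective A K) J).mp hJfg, hxJ⟩

lemma isStarIdeal_sSup (hs : s.IsFiniteType) {c : Set (Ideal A)} (hne : c.Nonempty)
    (hc : DirectedOn (· ≤ ·) c) (hstar : ∀ E ∈ c, IsStarIdeal s E) :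
    IsStarIdeal s (sSup c) := by
  obtain ⟨E₀, hE₀⟩ := hne
  have hne_bot : sSup c ≠ ⊥ := ne_bot_of_le_ne_bot (hstar E₀ hE₀).1 (le_sSup hE₀)
  refine ⟨hne_bot, le_antisymm (fun x hx => ?_) (s.le_star _ (coeIdeal_ne_zero.mpr hne_bot))⟩
  obtain ⟨J, hJc, hJ0, hJfg, hxJ⟩ := exists_fg_le_of_mem_star hs hne_bot hx
  obtain ⟨E, hE, hJE⟩ :=
    (CompleteLattice.isCompactElement_iff_le_of_directed_sSup_le (α := Ideal A) J).mp
      ((Submodule.fg_iff_compact J).mp hJfg) c ⟨E₀, hE₀⟩ hc hJc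
  have hxE : x ∈ (E : FractionalIdeal A⁰ K) := (hstar E hE).2 ▸ s.star_coeIdeal_mono hJ0 hJE hxJ
  exact coeIdeal_le_coeIdeal K |>.mpr (le_sSup hE) hxE

lemma exists_isStarMaximal_le (hs : s.IsFiniteType) (hI : IsStarIdeal s I) (hI_ne_top : I ≠ ⊤) :
    ∃ M, IsStarMaximal s M ∧ I ≤ M := by
  set S := {J : Ideal A | J ≠ ⊤ ∧ IsStarIdeal s J}
  have hchain : ∀ c ⊆ S, IsChain (· ≤ ·) c → ∀ y ∈ c, ∃ ub ∈ S, ∀ z ∈ c, z ≤ ub := by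
    refine fun c hc hchain y hy => ⟨sSup c, ⟨fun htop => ?_, ?_⟩, fun _ => le_sSup⟩
    · obtain ⟨E, hE, h1E⟩ := (Submodule.mem_sSup_of_directed ⟨y, hy⟩ hchain.directedOn).mp
        (htop ▸ Submodule.mem_top : (1 : A) ∈ sSup c)
      exact (hc hE).1 ((Ideal.eq_top_iff_one E).mpr h1E)
    · exact isStarIdeal_sSup hs ⟨y, hy⟩ hchain.directedOn fun E hE => (hc hE).2
  obtain ⟨M, hIM, hM⟩ := zorn_le_nonempty₀ _ hchain I ⟨hI_ne_top, hI⟩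
  exact ⟨M, ⟨hM.prop.1, hM.prop.2, fun J hJ hJs hMJ => (hM.eq_of_le ⟨hJ, hJs⟩ hMJ).symm⟩, hIM⟩

lemma _root_.IsStarMaximal.star_sup_eq_one_of_not_le (hM : IsStarMaximal s M) (hI : I ≠ ⊥)
    (hIM : ¬ I ≤ M) : s.star ((I ⊔ M : Ideal A) : FractionalIdeal A⁰ K) = 1 := by
  have h0 : I ⊔ M ≠ ⊥ := ne_bot_of_le_ne_bot hI le_sup_left
  by_contra hne
  have hcl : s.starCl (I ⊔ M) = M := hM.2.2 _ (mt (s.starCl_eq_top_iff h0).mp hne)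
    (s.isStarIdeal_starCl h0) (le_sup_right.trans (s.le_starCl h0))
  exact hIM (le_sup_left.trans ((s.le_starCl h0).trans hcl.le))

lemma exists_fg_le_star_sup_eq_one (hs : s.IsFiniteType) {P Q : Ideal A} (hPQ : P ⊔ Q ≠ ⊥)
    (h : s.star ((P ⊔ Q : Ideal A) : FractionalIdeal A⁰ K) = 1) :
    ∃ P' ≤ P, ∃ Q' ≤ Q, P'.FG ∧ Q'.FG ∧ P' ⊔ Q' ≠ ⊥ ∧
      s.star ((P' ⊔ Q' : Ideal A) : FractionalIdeal A⁰ K) = 1 := by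
  obtain ⟨J, hJ, hJ0, hJfg, h1J⟩ := exists_fg_le_of_mem_star hs hPQ (h ▸ one_mem_one A⁰)
  obtain ⟨P', hP', Q', hQ', hP'fg, hQ'fg, hJPQ⟩ :=
    Submodule.FG.exists_fg_le_sup_of_le_sup hJfg hJ
  exact ⟨P', hP', Q', hQ', hP'fg, hQ'fg, ne_bot_of_le_ne_bot hJ0 hJPQ,
    s.star_coeIdeal_eq_one_of_le hJ0 hJPQ
      (le_antisymm (s.star_coeIdeal_le_one hJ0) (one_le.mpr h1J))⟩

end FiniteType

section ComaximalFamilies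

def IsAdmissible (s : StarOperation A K) (a : A) (I : Ideal A) : Prop :=
  a ∈ I ∧ I ≠ ⊤ ∧ IsStarIdeal s I ∧ IsStarFinite s I

def starMaximalAbove (s : StarOperation A K) (I : Ideal A) : Set (Ideal A) :=
  {M | IsStarMaximal s M ∧ I ≤ M}

variable {s : StarOperation A K} {a : A} {b I M : Ideal A}

lemma starMaximalAbove_span_singleton :
    s.starMaximalAbove (Ideal.span {a}) = {M | IsStarMaximal s M ∧ a ∈ M} := by
  ext M
  simp only [starMaximalAbove, Set.mem_ofPred_eq, Ideal.span_singleton_le_iff_mem]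

lemma starMaximalAbove_starCl (hI : I ≠ ⊥) :
    s.starMaximalAbove (s.starCl I) = s.starMaximalAbove I :=
  Set.ext fun _ => ⟨fun ⟨hM, hIM⟩ => ⟨hM, (s.le_starCl hI).trans hIM⟩,
    fun ⟨hM, hIM⟩ => ⟨hM, s.starCl_le hI hM.2.1 hIM⟩⟩

lemma IsAdmissible.star_ne_one (hI : s.IsAdmissible a I) :
    s.star (I : FractionalIdeal A⁰ K) ≠ 1 :=
  s.star_coeIdeal_ne_one_of_le hI.2.2.1.1 le_rfl hI.2.2.1 hI.2.1

lemma isAdmissible_starCl (hI : IsStarFinite s I) (haI : a ∈ I) (hM : IsStarMaximal s M)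
    (hIM : I ≤ M) : s.IsAdmissible a (s.starCl I) :=
  ⟨s.le_starCl hI.1 haI, fun htop => hM.1 (top_le_iff.mp (htop ▸ s.starCl_le hI.1 hM.2.1 hIM)),
    s.isStarIdeal_starCl hI.1, hI.starCl⟩

lemma exists_infinite_mem_sigmaP {f : ℕ → Ideal A} (hf : ∀ n, s.IsAdmissible a (f n))
    (hcomax : ∀ m n, m < n → s.star ((f m ⊔ f n : Ideal A) : FractionalIdeal A⁰ K) = 1) :
    ∃ F ∈ SigmaP s a, F.Infinite := by
  have hne : ∀ m n, m < n → f m ≠ f n := fun m n hmn h => by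
    have := hcomax m n hmn
    rw [h, sup_idem] at this
    exact (hf n).star_ne_one this
  refine ⟨Set.range f, ⟨⟨?_, ?_⟩, ?_⟩,
    Set.infinite_range_of_injective (Function.Injective.of_lt_imp_ne hne)⟩
  · rintro _ ⟨n, rfl⟩
    exact (hf n).1
  · rintro _ ⟨m, rfl⟩ _ ⟨n, rfl⟩ hmn
    rw [Ideal.add_eq_sup]
    rcases lt_or_gt_of_ne (fun h => hmn (congrArg f h)) with h | h
    · exact hcomax m n h
    · rw [sup_comm]
      exact hcomax n m h
  · rintro _ ⟨n, rfl⟩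
    exact (hf n).2

lemma finite_of_mem_sigmaP (hs : s.IsFiniteType) (hfin : {M | IsStarMaximal s M ∧ a ∈ M}.Finite)
    {F : Set (Ideal A)} (hF : F ∈ SigmaP s a) : F.Finite := by
  obtain ⟨⟨haF, hcomax⟩, hF⟩ := hF
  choose! φ hφ using fun I hI => exists_isStarMaximal_le hs (hF I hI).2.1 (hF I hI).1
  have hφ_inj : Set.InjOn φ F := fun I hI J hJ hIJ => by
    by_contra hne
    have hIJ_le : I ⊔ J ≤ φ I := sup_le (hφ I hI).2 (hIJ ▸ (hφ J hJ).2)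
    exact s.star_coeIdeal_ne_one_of_le (ne_bot_of_le_ne_bot (hF I hI).2.1.1 le_sup_left) hIJ_le
      (hφ I hI).1.2.1 (hφ I hI).1.1 (hcomax I hI J hJ hne)
  refine Set.Finite.of_finite_image (hfin.subset ?_) hφ_inj
  rintro _ ⟨I, hI, rfl⟩
  exact ⟨(hφ I hI).1, (hφ I hI).2 (haF I hI)⟩

lemma _root_.IsStarMaximal.exists_fg_le_forall_star_sup_eq_one (hs : s.IsFiniteType)
    (hM : IsStarMaximal s M) {t : Finset (Ideal A)} (ht : ∀ x ∈ t, x ≠ ⊥ ∧ ¬ x ≤ M) :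
    ∃ e ≤ M, e.FG ∧ ∀ x ∈ t, s.star ((x ⊔ e : Ideal A) : FractionalIdeal A⁰ K) = 1 := by
  have hsep : ∀ x ∈ t, ∃ e ≤ M, e.FG ∧ s.star ((x ⊔ e : Ideal A) : FractionalIdeal A⁰ K) = 1 := by
    intro x hx
    obtain ⟨x', hx', e, he, -, hefg, h0, h1⟩ := exists_fg_le_star_sup_eq_one hs
      (ne_bot_of_le_ne_bot (ht x hx).1 le_sup_left)
      (hM.star_sup_eq_one_of_not_le (ht x hx).1 (ht x hx).2)
    exact ⟨e, he, hefg, s.star_coeIdeal_eq_one_of_le h0 (sup_le_sup_right hx' e) h1⟩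
  choose! e he using hsep
  exact ⟨t.sup e, Finset.sup_le fun x hx => (he x hx).1,
    Submodule.fg_finset_sup t e fun x hx => (he x hx).2.1,
    fun x hx => s.star_coeIdeal_eq_one_of_le (ne_bot_of_le_ne_bot (ht x hx).1 le_sup_left)
      (sup_le_sup_left (Finset.le_sup hx) x) (he x hx).2.2⟩

lemma exists_comaximal_pair_comaximal_with_finset (hs : s.IsFiniteType)
    (hb : s.IsAdmissible a b) (hV : (s.starMaximalAbove b).Infinite) {t : Finset (Ideal A)}
    (ht : ∀ x ∈ t, x ≠ ⊥ ∧ (s.starMaximalAbove x).Finite) :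
    ∃ c d, s.IsAdmissible a c ∧ s.IsAdmissible a d ∧ b ≤ c ∧ b ≤ d ∧
      s.star ((c ⊔ d : Ideal A) : FractionalIdeal A⁰ K) = 1 ∧
      ∀ x ∈ t, s.star ((x ⊔ d : Ideal A) : FractionalIdeal A⁰ K) = 1 := by
  obtain ⟨M, ⟨hM, hbM⟩, hMt⟩ :=
    (hV.sdiff (t.finite_toSet.biUnion fun x hx => (ht x hx).2)).nonempty
  obtain ⟨N, ⟨hN, hbN⟩, hNM⟩ := (hV.sdiff (Set.finite_singleton M)).nonempty
  have hMN : s.star ((N ⊔ M : Ideal A) : FractionalIdeal A⁰ K) = 1 :=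
    hM.star_sup_eq_one_of_not_le hN.2.1.1 fun h => hNM (hN.2.2 M hM.1 hM.2.1 h).symm
  obtain ⟨n, hnN, m, hmM, hnfg, hmfg, hnm0, hnm⟩ := exists_fg_le_star_sup_eq_one hs
    (ne_bot_of_le_ne_bot hN.2.1.1 le_sup_left) hMN
  obtain ⟨e, heM, hefg, hte⟩ := hM.exists_fg_le_forall_star_sup_eq_one hs
    fun x hx => ⟨(ht x hx).1, fun hxM => hMt (Set.mem_biUnion hx ⟨hM, hxM⟩)⟩
  have hbn := hb.2.2.2.sup_fg hnfg
  have hbme := hb.2.2.2.sup_fg (Submodule.FG.sup hmfg hefg)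
  refine ⟨s.starCl (b ⊔ n), s.starCl (b ⊔ (m ⊔ e)),
    isAdmissible_starCl hbn (Ideal.mem_sup_left hb.1) hN (sup_le hbN hnN),
    isAdmissible_starCl hbme (Ideal.mem_sup_left hb.1) hM (sup_le hbM (sup_le hmM heM)),
    le_sup_left.trans (s.le_starCl hbn.1), le_sup_left.trans (s.le_starCl hbme.1),
    s.star_coeIdeal_eq_one_of_le hnm0 (sup_le_sup ?_ ?_) hnm, fun x hx => ?_⟩
  · exact le_sup_right.trans (s.le_starCl hbn.1)
  · exact (le_sup_left.trans le_sup_right).trans (s.le_starCl hbme.1)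
  · exact s.star_coeIdeal_eq_one_of_le (ne_bot_of_le_ne_bot (ht x hx).1 le_sup_left)
      (sup_le_sup_left ((le_sup_right.trans le_sup_right).trans (s.le_starCl hbme.1)) x) (hte x hx)

lemma exists_comaximal_split (hs : s.IsFiniteType) (H : ∀ F ∈ SigmaP s a, F.Finite)
    (hb : s.IsAdmissible a b) (hV : (s.starMaximalAbove b).Infinite) :
    ∃ c d, s.IsAdmissible a c ∧ s.IsAdmissible a d ∧ b ≤ c ∧ b ≤ d ∧
      s.star ((c ⊔ d : Ideal A) : FractionalIdeal A⁰ K) = 1 ∧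
      (s.starMaximalAbove d).Infinite := by
  by_contra! hsplit
  have : Std.Symm fun x y : Ideal A => s.star ((x ⊔ y : Ideal A) : FractionalIdeal A⁰ K) = 1 :=
    ⟨fun x y h => by rwa [sup_comm]⟩
  obtain ⟨f, hf, hcomax⟩ := exists_seq_of_forall_finset_exists'
    (fun x => s.IsAdmissible a x ∧ (s.starMaximalAbove x).Finite) _ fun t ht => by
      obtain ⟨c, d, hc, hd, hbc, hbd, hcd, htd⟩ := exists_comaximal_pair_comaximal_with_finset hs
        hb hV fun x hx => ⟨(ht x hx).1.2.2.1.1, (ht x hx).2⟩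
      exact ⟨d, ⟨hd, hsplit c d hc hd hbc hbd hcd⟩, htd⟩
  obtain ⟨F, hF, hF_inf⟩ := exists_infinite_mem_sigmaP (fun n => (hf n).1)
    fun m n h => hcomax h.ne
  exact hF_inf (H F hF)

lemma finite_starMaximalAbove_span_singleton (hs : s.IsFiniteType) (ha : a ≠ 0)
    (H : ∀ F ∈ SigmaP s a, F.Finite) : (s.starMaximalAbove (Ideal.span {a})).Finite := by
  rw [← Set.not_infinite]
  intro hinf
  obtain ⟨M, hM, haM⟩ := hinf.nonempty
  have hspan : Ideal.span {a} ≠ ⊥ := by simpa [Ideal.span_singleton_eq_bot] using ha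
  set b₀ := s.starCl (Ideal.span {a})
  have hb₀ : s.IsAdmissible a b₀ ∧ (s.starMaximalAbove b₀).Infinite :=
    ⟨isAdmissible_starCl (s.isStarFinite_of_fg hspan ⟨{a}, by simp⟩)
      (Ideal.mem_span_singleton_self a) hM haM, by rwa [starMaximalAbove_starCl hspan]⟩
  choose! c d hc hd hbc hbd hcd hVd using
    fun b (hb : s.IsAdmissible a b ∧ (s.starMaximalAbove b).Infinite) =>
      exists_comaximal_split hs H hb.1 hb.2
  have he : ∀ n, s.IsAdmissible a (d^[n] b₀) ∧ (s.starMaximalAbove (d^[n] b₀)).Infinite := by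
    intro n
    induction n with
    | zero => exact hb₀
    | succ n ih =>
      rw [Function.iterate_succ_apply']
      exact ⟨hd _ ih, hVd _ ih⟩
  have hmono : Monotone fun n => d^[n] b₀ := monotone_nat_of_le_succ fun n => by
    simp only [Function.iterate_succ_apply']
    exact hbd _ (he n)
  obtain ⟨F, hF, hF_inf⟩ := exists_infinite_mem_sigmaP (f := fun n => c (d^[n] b₀))
    (fun n => hc _ (he n)) fun m n hmn => by
      have hle : d^[m + 1] b₀ ≤ c (d^[n] b₀) := (hmono hmn).trans (hbc _ (he n))
      rw [Function.iterate_succ_apply'] at hle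
      exact s.star_coeIdeal_eq_one_of_le (ne_bot_of_le_ne_bot (hc _ (he m)).2.2.1.1 le_sup_left)
        (sup_le_sup_left hle _) (hcd _ (he m))
  exact hF_inf (H F hF)

end ComaximalFamilies

end StarOperation

/-- Let `A` be an integral domain and `⋆` a finite type star operation on `A`. Then `A`
has the ⋆-finite character (every nonzero element lies in only finitely many ⋆-maximal
ideals) iff for every nonzero `a ∈ A`, every ⋆-comaximal collection over `a` of proper
⋆-finite ⋆-ideals is finite. -/
theorem star_finite_character_iff_comaximal_families_finite
    (s : StarOperation A K) (hs : s.IsFiniteType) :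
    (∀ a : A, a ≠ 0 → {M : Ideal A | IsStarMaximal s M ∧ a ∈ M}.Finite) ↔
      (∀ a : A, a ≠ 0 → ∀ F ∈ SigmaP s a, F.Finite) := by
  refine ⟨fun hfin a ha F hF => StarOperation.finite_of_mem_sigmaP hs (hfin a ha) hF,
    fun H a ha => ?_⟩
  rw [← StarOperation.starMaximalAbove_span_singleton]
  exact StarOperation.finite_starMaximalAbove_span_singleton hs ha (H a ha)
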